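/- arXiv:1504.06760 — 6 statements merged into one kernel-verified Lean document; each statement's English description precedes it below -/
import Mathlib

section
/- Let G = (V, E) be a finite directed graph and let e ∈ E. Suppose S ⊆ V is a minimal (with respect to set inclusion) subset such that G|_S contains a directed cycle and (G − e)|_S is acyclic. Then G|_S is a unicycle and e is an edge of G|_S. -/
variable {V : Type*}

/-- A directed cycle given as a nonempty list of distinct vertices
`v₁, …, v_k` with edges `v₁→v₂, …, v_{k-1}→v_k, v_k→v₁`. -/
def IsCycle (E : V → V → Prop) : List V → Prop
  | [] => False
  | v :: l => (v :: l).Nodup ∧ List.Chain E v (l ++ [v])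

/-- A directed graph is acyclic if it contains no directed cycle. -/
def Acyclic (E : V → V → Prop) : Prop := ∀ l : List V, ¬ IsCycle E l

/-- The subgraph of `E` induced by the vertex set `S`. -/
def Induced (E : V → V → Prop) (S : Set V) : V → V → Prop :=
  fun a b => a ∈ S ∧ b ∈ S ∧ E a b

/-- The graph obtained from `E` by deleting the edge `e`. -/
def Delete (E : V → V → Prop) (e : V × V) : V → V → Prop :=
  fun a b => E a b ∧ (a, b) ≠ e

/-- `(a, b)` is an edge of the directed cycle determined by the list `l`
(consecutive elements, wrapping around). -/
def CycleEdge (l : List V) (a b : V) : Prop :=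
  ∃ i : Fin l.length, l.get i = a ∧ l.get ⟨(↑i + 1) % l.length, Nat.mod_lt _ i.pos⟩ = b

/-- `G|_S` is a unicycle: the edge set of the induced subgraph on `S` is exactly
the edge set of a Hamiltonian directed cycle of `G|_S`. -/
def IsUnicycle (E : V → V → Prop) (S : Set V) : Prop :=
  ∃ l : List V, l ≠ [] ∧ l.Nodup ∧ (∀ v, v ∈ l ↔ v ∈ S) ∧
    ∀ a b, Induced E S a b ↔ CycleEdge l a b

/-!
Take a cycle `l` of `G|_S`. Its vertex set still carries a cycle and inherits acyclicity of
`G - e`, so by minimality it is all of `S`; and `e` lies on `l`, since otherwise `l` would be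
a cycle of `(G - e)|_S`. Finally `l` has no chord `a → b`: following `l` from `b` to `a` and
closing up through the chord gives a cycle on a subset of `S`, which by the same minimality
argument must use every vertex, so `a` is the predecessor of `b` on `l`.
-/

section Cycles

variable {E F : V → V → Prop} {l : List V} {a b : V}

lemma cycleEdge_iff : CycleEdge l a b ↔ ∃ i, ∃ h : i < l.length,
    l[i] = a ∧ l[(i + 1) % l.length]'(Nat.mod_lt _ (by omega)) = b := by
  simp [CycleEdge, Fin.exists_iff]

lemma getElem_cons_append_singleton {v : V} {t : List V} {i : ℕ} (hi : i < t.length + 1) :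
    (v :: (t ++ [v]))[i]'(by simp; omega) = (v :: t)[i] := by
  simp only [← List.cons_append]
  exact List.getElem_append_left hi

lemma getElem_succ_cons_append_singleton {v : V} {t : List V} {i : ℕ} (hi : i < t.length + 1) :
    (v :: (t ++ [v]))[i + 1]'(by simp; omega) =
      (v :: t)[(i + 1) % (t.length + 1)]'(Nat.mod_lt _ (by omega)) := by
  rcases Nat.lt_or_ge (i + 1) (t.length + 1) with h | h
  · simp [Nat.mod_eq_of_lt h, List.getElem_append_left (show i < t.length by omega)]
  · obtain rfl : i = t.length := by omega
    simp

lemma cycleEdge_cons_iff {v : V} {t : List V} : CycleEdge (v :: t) a b ↔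
    ∃ i, ∃ h : i + 1 < (v :: (t ++ [v])).length,
      (v :: (t ++ [v]))[i] = a ∧ (v :: (t ++ [v]))[i + 1] = b := by
  rw [cycleEdge_iff]
  refine exists_congr fun i => ⟨fun ⟨hi, ha, hb⟩ => ?_, fun ⟨hi, ha, hb⟩ => ?_⟩
  · simp only [List.length_cons] at hi
    exact ⟨by simp; omega, by rwa [getElem_cons_append_singleton hi],
      by rwa [getElem_succ_cons_append_singleton hi]⟩
  · have hi' : i < t.length + 1 := by simpa using hi
    exact ⟨by simp; omega, by rwa [getElem_cons_append_singleton hi'] at ha,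
      by rwa [getElem_succ_cons_append_singleton hi'] at hb⟩

lemma isCycle_iff :
    IsCycle E l ↔ l ≠ [] ∧ l.Nodup ∧ ∀ a b, CycleEdge l a b → E a b := by
  cases l with
  | nil => simp [IsCycle]
  | cons v t =>
    show _ ∧ List.IsChain E (v :: (t ++ [v])) ↔ _
    simp only [List.isChain_iff_getElem, cycleEdge_cons_iff]
    grind

lemma CycleEdge.left_mem (h : CycleEdge l a b) : a ∈ l := by
  obtain ⟨i, hi, rfl, -⟩ := cycleEdge_iff.1 h
  exact List.getElem_mem hi

lemma CycleEdge.right_mem (h : CycleEdge l a b) : b ∈ l := by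
  obtain ⟨i, hi, -, rfl⟩ := cycleEdge_iff.1 h
  exact List.getElem_mem _

lemma exists_cycleEdge_of_mem (ha : a ∈ l) : ∃ b, CycleEdge l a b := by
  obtain ⟨i, hi, rfl⟩ := List.getElem_of_mem ha
  exact ⟨_, cycleEdge_iff.2 ⟨i, hi, rfl, rfl⟩⟩

lemma CycleEdge.of_rotate {k : ℕ} (h : CycleEdge (l.rotate k) a b) : CycleEdge l a b := by
  obtain ⟨i, hi, rfl, rfl⟩ := cycleEdge_iff.1 h
  have hl : 0 < l.length := by rw [List.length_rotate] at hi; omega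
  refine cycleEdge_iff.2 ⟨(i + k) % l.length, Nat.mod_lt _ hl, by simp, ?_⟩
  simp only [List.getElem_rotate, List.length_rotate, Nat.mod_add_mod, Nat.add_right_comm i 1 k]

lemma CycleEdge.of_take {K : ℕ} (hK : K < l.length) (h : CycleEdge (l.take (K + 1)) a b) :
    CycleEdge l a b ∨ (a = l[K] ∧ b = l[0]) := by
  obtain ⟨i, hi, rfl, rfl⟩ := cycleEdge_iff.1 h
  have hlen : (l.take (K + 1)).length = K + 1 := by rw [List.length_take]; omega
  simp only [hlen] at hi ⊢
  rcases (Nat.le_of_lt_succ hi).lt_or_eq with hlt | rfl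
  · refine .inl (cycleEdge_iff.2 ⟨i, by omega, by simp, ?_⟩)
    simp [Nat.mod_eq_of_lt (show i + 1 < l.length by omega),
      Nat.mod_eq_of_lt (show i + 1 < K + 1 by omega)]
  · exact .inr ⟨by simp, by simp⟩

lemma IsCycle.imp (hl : IsCycle E l) (h : ∀ a b, CycleEdge l a b → E a b → F a b) :
    IsCycle F l := by
  obtain ⟨hne, hnd, hE⟩ := isCycle_iff.1 hl
  exact isCycle_iff.2 ⟨hne, hnd, fun a b hab => h a b hab (hE a b hab)⟩

lemma IsCycle.rotate (hl : IsCycle E l) (k : ℕ) : IsCycle E (l.rotate k) := by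
  obtain ⟨hne, hnd, hE⟩ := isCycle_iff.1 hl
  exact isCycle_iff.2 ⟨by simpa, List.nodup_rotate.2 hnd, fun a b hab => hE a b hab.of_rotate⟩

lemma IsCycle.take (hl : IsCycle E l) {K : ℕ} (hK : K < l.length) (hE : E l[K] l[0]) :
    IsCycle E (l.take (K + 1)) := by
  obtain ⟨hne, hnd, hl⟩ := isCycle_iff.1 hl
  refine isCycle_iff.2 ⟨by simp [hne], hnd.sublist (List.take_sublist _ _), fun a b hab => ?_⟩
  rcases hab.of_take hK with hab | ⟨rfl, rfl⟩
  exacts [hl a b hab, hE]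

lemma IsCycle.cycleEdge_of_rel (hl : IsCycle E l) (hmin : ∀ c, IsCycle E c → c ⊆ l → l ⊆ c)
    (ha : a ∈ l) (hb : b ∈ l) (hab : E a b) : CycleEdge l a b := by
  -- Rotate `l` to start at `b`; its prefix ending at `a` closes up through the chord `a → b`.
  obtain ⟨j, hj, rfl⟩ := List.getElem_of_mem hb
  have hl' : IsCycle E (l.rotate j) := hl.rotate j
  have hb' : (l.rotate j)[0]'(by simp; omega) = l[j] := by simp [Nat.mod_eq_of_lt hj]
  obtain ⟨K, hK, rfl⟩ := List.getElem_of_mem (List.mem_rotate.2 ha : a ∈ l.rotate j)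
  have hc := hl'.take hK (by rwa [hb'])
  have hspan : l.rotate j ⊆ (l.rotate j).take (K + 1) := fun v hv =>
    hmin _ hc (fun w hw => List.mem_rotate.1 (List.take_subset _ _ hw)) (List.mem_rotate.1 hv)
  have hK' : K + 1 = (l.rotate j).length := by
    have := ((isCycle_iff.1 hl').2.1.subperm hspan).length_le
    simp only [List.length_rotate, List.length_take] at this hK ⊢
    omega
  refine CycleEdge.of_rotate (k := j) (cycleEdge_iff.2 ⟨K, hK, rfl, ?_⟩)
  simp only [← hK', Nat.mod_self, hb']

lemma IsCycle.mem_of_induced {S : Set V} (hl : IsCycle (Induced E S) l) (ha : a ∈ l) :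
    a ∈ S := by
  obtain ⟨b, hab⟩ := exists_cycleEdge_of_mem ha
  exact ((isCycle_iff.1 hl).2.2 a b hab).1

lemma isCycle_induced_iff {S : Set V} :
    IsCycle (Induced E S) l ↔ IsCycle E l ∧ ∀ v ∈ l, v ∈ S :=
  ⟨fun hl => ⟨hl.imp fun _ _ _ hab => hab.2.2, fun _ => hl.mem_of_induced⟩,
    fun ⟨hl, hS⟩ => hl.imp fun a b hab h => ⟨hS a hab.left_mem, hS b hab.right_mem, h⟩⟩

end Cycles

lemma Acyclic.induced_anti {F : V → V → Prop} {S T : Set V} (hST : S ⊆ T)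
    (hT : Acyclic (Induced F T)) : Acyclic (Induced F S) :=
  fun l hl => hT l (hl.imp fun _ _ _ h => ⟨hST h.1, hST h.2.1, h.2.2⟩)

lemma forall_mem_of_isCycle_of_minimal {E F : V → V → Prop} {S : Set V}
    (hF : Acyclic (Induced F S))
    (hmin : ∀ S' : Set V, S' ⊂ S →
      ¬ ((∃ l : List V, IsCycle (Induced E S') l) ∧ Acyclic (Induced F S')))
    (c : List V) (hc : IsCycle E c) (hcS : ∀ v ∈ c, v ∈ S) : ∀ v ∈ S, v ∈ c := by
  by_contra! ⟨v, hvS, hvc⟩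
  have hsub : {v | v ∈ c} ⊂ S := Set.ssubset_iff_of_subset hcS |>.2 ⟨v, hvS, hvc⟩
  exact hmin _ hsub
    ⟨⟨c, isCycle_induced_iff.2 ⟨hc, fun _ => id⟩⟩, hF.induced_anti hsub.subset⟩

theorem stmt2 (E : V → V → Prop) (e : V × V) (S : Set V)
    (h1 : ∃ l : List V, IsCycle (Induced E S) l)
    (h2 : Acyclic (Induced (Delete E e) S))
    (hmin : ∀ S' : Set V, S' ⊂ S →
      ¬ ((∃ l : List V, IsCycle (Induced E S') l) ∧ Acyclic (Induced (Delete E e) S'))) :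
    IsUnicycle E S ∧ Induced E S e.1 e.2 := by
  obtain ⟨l, hl⟩ := h1
  obtain ⟨hlE, hlS⟩ := isCycle_induced_iff.1 hl
  have hspan := forall_mem_of_isCycle_of_minimal h2 hmin
  have hmem : ∀ v, v ∈ l ↔ v ∈ S := fun v => ⟨hlS v, hspan l hlE hlS v⟩
  have hedges : ∀ a b, Induced E S a b ↔ CycleEdge l a b := fun a b =>
    ⟨fun h => hlE.cycleEdge_of_rel
        (fun c hc hcl v hv => hspan c hc (fun w hw => hlS w (hcl hw)) v (hlS v hv))
        ((hmem a).2 h.1) ((hmem b).2 h.2.1) h.2.2,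
      (isCycle_iff.1 hl).2.2 a b⟩
  have he : CycleEdge l e.1 e.2 := by
    by_contra he
    refine h2 l (hl.imp fun a b hab h => ⟨h.1, h.2.1, h.2.2, fun hab' => he ?_⟩)
    subst hab'
    exact hab
  obtain ⟨hne, hnd, -⟩ := isCycle_iff.1 hl
  exact ⟨⟨l, hne, hnd, hmem, hedges⟩, (hedges _ _).2 he⟩
end

section
/- Let n ≥ 3 and let G be a directed graph on Z_n in which every edge is of the form (j−1, j) or (j+1, j) (indices mod n), and suppose G has no directed cycle of length 2. Then G contains at most one directed cycle, and if it contains one, that cycle is Hamiltonian. -/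
/-!
Along a directed cycle `v₀ → v₁ → ⋯ → v_{k-1} → v₀` every step `v_{i+1} - v_i` is `±1`. Two
consecutive steps cannot cancel, since `v_{i+2} = v_i` is impossible in a cycle of length `k ≥ 3`
(lengths 1 and 2 are excluded by the absence of loops and of 2-cycles). Hence all steps equal one
`e = ±1`, the cycle is the progression `a, a + e, a + 2e, …`, and closing it up forces `n ∣ k ≤ n`:
the cycle is Hamiltonian and contains every edge `v → v + e`. Two cycles with opposite steps would
produce the 2-cycle `0 → e → 0`, so all cycles have the same step and are rotations of each other.
-/

variable {V : Type*}

section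

variable {E : V → V → Prop} {l : List V}

namespace IsCycle

theorem ne_nil (h : IsCycle E l) : l ≠ [] := by
  rintro rfl; exact h

theorem nodup (h : IsCycle E l) : l.Nodup := by
  cases l with
  | nil => exact h.elim
  | cons v t => exact h.1

theorem length_pos (h : IsCycle E l) : 0 < l.length :=
  List.length_pos_iff.mpr h.ne_nil

theorem rel_getElem_mod (h : IsCycle E l) (i : ℕ) :
    E (l[i % l.length]'(Nat.mod_lt _ h.length_pos))
      (l[(i + 1) % l.length]'(Nat.mod_lt _ h.length_pos)) := by
  cases l with
  | nil => exact h.elim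
  | cons v t =>
    have hk : 0 < (v :: t).length := by simp
    have hi := Nat.mod_lt i hk
    have hedge := List.isChain_iff_getElem.mp h.2 (i % (v :: t).length) (by simpa using hi)
    rcases Nat.lt_or_ge (i % (v :: t).length + 1) (v :: t).length with hlt | hge
    · have hmod : (i + 1) % (v :: t).length = i % (v :: t).length + 1 := by
        rw [← Nat.mod_add_mod, Nat.mod_eq_of_lt hlt]
      simp only [hmod]
      grind
    · have hmod : (i + 1) % (v :: t).length = 0 := by
        rw [← Nat.mod_add_mod, show i % (v :: t).length + 1 = (v :: t).length by omega,
          Nat.mod_self]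
      simp only [hmod]
      grind

theorem getElem_mod_add_two_ne (h : IsCycle E l) (h3 : 3 ≤ l.length) (i : ℕ) :
    l[(i + 2) % l.length]'(Nat.mod_lt _ h.length_pos) ≠
      l[i % l.length]'(Nat.mod_lt _ h.length_pos) := by
  rw [Ne, h.nodup.getElem_inj_iff]
  intro hi
  have h2 : 2 ≡ 0 [MOD l.length] := Nat.ModEq.add_left_cancel' i hi
  have := Nat.le_of_dvd two_pos (Nat.modEq_zero_iff_dvd.mp h2)
  omega

end IsCycle

theorem isCycle_pair {u v : V} (hne : u ≠ v) (huv : E u v) (hvu : E v u) : IsCycle E [u, v] :=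
  ⟨by simpa using hne, .cons_cons huv (.cons_cons hvu (.singleton u))⟩

end

theorem mul_self_eq_one_of_eq_one_or_eq_neg_one {R : Type*} [Ring R] {e : R}
    (he : e = 1 ∨ e = -1) : e * e = 1 := by
  rcases he with rfl | rfl <;> simp

theorem eq_add_nsmul_of_sub_eq_or_sub_eq_neg {A : Type*} [AddCommGroup A] {f : ℕ → A} {d : A}
    (hstep : ∀ i, f (i + 1) - f i = d ∨ f (i + 1) - f i = -d) (hback : ∀ i, f (i + 2) ≠ f i)
    (i : ℕ) : f i = f 0 + i • (f 1 - f 0) := by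
  have hconst : ∀ i, f (i + 1) - f i = f 1 - f 0 := by
    intro i
    induction i with
    | zero => rfl
    | succ i ih =>
      have hsum : (f (i + 1 + 1) - f (i + 1)) + (f (i + 1) - f i) ≠ 0 := by
        rw [sub_add_sub_cancel, sub_ne_zero]; exact hback i
      rw [← ih]
      rcases hstep (i + 1) with h₁ | h₁ <;> rcases hstep i with h₀ | h₀ <;>
        rw [h₁, h₀] at hsum ⊢ <;> simp at hsum ⊢
  induction i with
  | zero => simp
  | succ i ih => rw [succ_nsmul, ← add_assoc, ← ih, ← hconst i, add_sub_cancel]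

section ZMod

variable {n : ℕ}

theorem rotate_map_range_add_mul (a e : ZMod n) (m : ℕ) :
    ((List.range n).map fun i : ℕ => a + i * e).rotate m =
      (List.range n).map fun i : ℕ => a + m * e + i * e := by
  refine List.ext_getElem (by simp) fun i _ _ => ?_
  simp only [List.getElem_rotate, List.getElem_map, List.getElem_range, List.length_map,
    List.length_range, ZMod.natCast_mod]
  push_cast
  ring

theorem natCast_val_mul_mul_eq_self [NeZero n] {e : ZMod n} (he : e * e = 1) (x : ZMod n) :
    ((x * e).val : ZMod n) * e = x := by
  rw [ZMod.natCast_zmod_val, mul_assoc, he, mul_one]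

theorem mem_map_range_add_mul [NeZero n] {e : ZMod n} (he : e * e = 1) (a v : ZMod n) :
    v ∈ (List.range n).map fun i : ℕ => a + i * e :=
  List.mem_map.mpr ⟨_, List.mem_range.mpr (ZMod.val_lt ((v - a) * e)),
    by rw [natCast_val_mul_mul_eq_self he, add_sub_cancel]⟩

theorem isRotated_map_range_add_mul [NeZero n] {e : ZMod n} (he : e * e = 1) (a₁ a₂ : ZMod n) :
    ((List.range n).map fun i : ℕ => a₁ + i * e) ~r
      (List.range n).map fun i : ℕ => a₂ + i * e :=
  ⟨((a₂ - a₁) * e).val, by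
    rw [rotate_map_range_add_mul, natCast_val_mul_mul_eq_self he, add_sub_cancel]⟩

variable {E : ZMod n → ZMod n → Prop}

theorem IsCycle.rel_add_of_eq_map_range [NeZero n] {a e : ZMod n} (he : e * e = 1)
    (hl : IsCycle E ((List.range n).map fun i : ℕ => a + i * e)) (v : ZMod n) : E v (v + e) := by
  have hi := natCast_val_mul_mul_eq_self he (v - a)
  have h := hl.rel_getElem_mod ((v - a) * e).val
  simp only [List.getElem_map, List.getElem_range, List.length_map, List.length_range,
    ZMod.natCast_mod] at h
  convert h using 1 <;> push_cast <;> linear_combination -hi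

variable [Fact (1 < n)]

theorem IsCycle.exists_eq_map_range (hE : ∀ a b, E a b → b = a + 1 ∨ b = a - 1)
    (hno2 : ¬ ∃ l : List (ZMod n), IsCycle E l ∧ l.length = 2) {l : List (ZMod n)}
    (hl : IsCycle E l) :
    ∃ a e : ZMod n, (e = 1 ∨ e = -1) ∧ l = (List.range n).map fun i : ℕ => a + i * e := by
  obtain ⟨f, hf⟩ : ∃ f : ℕ → ZMod n,
      ∀ i, f i = l[i % l.length]'(Nat.mod_lt _ hl.length_pos) := ⟨_, fun _ => rfl⟩
  have hstep : ∀ i, f (i + 1) - f i = 1 ∨ f (i + 1) - f i = -1 := by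
    intro i
    have hedge := hl.rel_getElem_mod i
    rw [← hf, ← hf] at hedge
    rcases hE _ _ hedge with h | h <;> rw [h] <;> simp
  have hk1 : l.length ≠ 1 := by
    intro h1
    have : f 1 = f 0 := by simp only [hf, h1]
    rcases hstep 0 with h | h <;> simp [this] at h
  have hk2 : l.length ≠ 2 := fun h2 => hno2 ⟨l, hl, h2⟩
  have hback (i : ℕ) : f (i + 2) ≠ f i := by
    rw [hf, hf]
    exact hl.getElem_mod_add_two_ne (by have := hl.length_pos; omega) i
  have hprog (i : ℕ) : f i = f 0 + i * (f 1 - f 0) := by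
    rw [← nsmul_eq_mul]; exact eq_add_nsmul_of_sub_eq_or_sub_eq_neg hstep hback i
  have he : f 1 - f 0 = 1 ∨ f 1 - f 0 = -1 := by simpa using hstep 0
  have hlen : l.length = n := by
    have hclose : (l.length : ZMod n) * (f 1 - f 0) = 0 := by
      have hperiod : f l.length = f 0 := by simp only [hf, Nat.mod_self, Nat.zero_mod]
      linear_combination hperiod - hprog l.length
    have hdvd : n ∣ l.length := (ZMod.natCast_eq_zero_iff _ _).mp
      (by rcases he with h | h <;> simpa [h] using hclose)
    exact le_antisymm (by simpa using hl.nodup.length_le_card)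
      (Nat.le_of_dvd hl.length_pos hdvd)
  refine ⟨f 0, f 1 - f 0, he, List.ext_getElem (by simp [hlen]) fun i h₁ _ => ?_⟩
  rw [List.getElem_map, List.getElem_range, ← hprog, hf]
  simp only [Nat.mod_eq_of_lt h₁]

theorem eq_of_forall_rel_add (hno2 : ¬ ∃ l : List (ZMod n), IsCycle E l ∧ l.length = 2)
    {e₁ e₂ : ZMod n} (he₁ : e₁ = 1 ∨ e₁ = -1) (he₂ : e₂ = 1 ∨ e₂ = -1)
    (h₁ : ∀ v, E v (v + e₁)) (h₂ : ∀ v, E v (v + e₂)) : e₁ = e₂ := by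
  by_contra hne
  have hneg : e₁ + e₂ = 0 := by
    rcases he₁ with rfl | rfl <;> rcases he₂ with rfl | rfl <;> simp_all
  have hne₁ : (0 : ZMod n) ≠ e₁ := by rcases he₁ with rfl | rfl <;> simp
  refine hno2 ⟨[0, e₁], isCycle_pair hne₁ ?_ ?_, rfl⟩
  · simpa using h₁ 0
  · simpa [hneg] using h₂ e₁

end ZMod

theorem stmt8 (n : ℕ) (hn : 3 ≤ n) (E : ZMod n → ZMod n → Prop)
    (hE : ∀ a b, E a b → b = a + 1 ∨ b = a - 1)
    (hno2 : ¬ ∃ l : List (ZMod n), IsCycle E l ∧ l.length = 2) :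
    (∀ l₁ l₂ : List (ZMod n), IsCycle E l₁ → IsCycle E l₂ → l₁ ~r l₂) ∧
      (∀ l : List (ZMod n), IsCycle E l → ∀ v : ZMod n, v ∈ l) := by
  have : Fact (1 < n) := ⟨by omega⟩
  refine ⟨fun l₁ l₂ h₁ h₂ => ?_, fun l hl v => ?_⟩
  · obtain ⟨a₁, e₁, he₁, rfl⟩ := h₁.exists_eq_map_range hE hno2
    obtain ⟨a₂, e₂, he₂, rfl⟩ := h₂.exists_eq_map_range hE hno2
    have hsq₁ := mul_self_eq_one_of_eq_one_or_eq_neg_one he₁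
    have hsq₂ := mul_self_eq_one_of_eq_one_or_eq_neg_one he₂
    obtain rfl : e₁ = e₂ := eq_of_forall_rel_add hno2 he₁ he₂
      (h₁.rel_add_of_eq_map_range hsq₁) (h₂.rel_add_of_eq_map_range hsq₂)
    exact isRotated_map_range_add_mul hsq₁ a₁ a₂
  · obtain ⟨a, e, he, rfl⟩ := hl.exists_eq_map_range hE hno2
    exact mem_map_range_add_mul (mul_self_eq_one_of_eq_one_or_eq_neg_one he) a v
end

section
/- Let G = (V, E) be a finite directed graph, let S ⊆ V with |S| = m ≥ 2, and suppose G|_S is a unicycle containing the edge e. Define the rate tuple R by R_i = 1/(m−1) for i ∈ S and R_i = 0 otherwise. Then R satisfies every MAIS constraint of G (i.e., Σ_{j∈T} R_j ≤ 1 for all T ⊆ V with G|_T acyclic), but R violates some MAIS constraint of G − e (namely Σ_{j∈S} R_j = m/(m−1) > 1 while (G − e)|_S is acyclic). -/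
variable {V : Type*}

/-!
The Hamiltonian cycle of `G|_S` is a cycle of `G|_T` whenever `S ⊆ T`, so an acyclic `T` misses
a vertex of `S` and carries total rate at most `(m - 1) / (m - 1) = 1`. Deleting the cycle edge
`e = (l[j], l[j+1])` leaves a Hamiltonian path: the position of a vertex on `l`, counted cyclically
from `l[j+1]`, strictly increases along every remaining edge, so no directed cycle survives.
-/

theorem Fin.sub_add_one_lt_add_one_sub_add_one {n : ℕ} {i j : Fin (n + 1)} (h : i ≠ j) :
    i - (j + 1) < i + 1 - (j + 1) := by
  rw [show i + 1 - (j + 1) = i - (j + 1) + 1 by abel, Fin.lt_add_one_iff,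
    Fin.lt_last_iff_ne_last]
  intro hlast
  apply h
  rw [sub_eq_iff_eq_add.1 hlast, show Fin.last n + (j + 1) = j + (Fin.last n + 1) by abel,
    Fin.last_add_one, add_zero]

variable {E : V → V → Prop}

theorem Acyclic.of_potential {α : Type*} [Preorder α] (f : V → α)
    (hf : ∀ a b, E a b → f a < f b) : Acyclic E := by
  rintro (_ | ⟨v, t⟩) hl
  · exact hl
  · have : Cycle.Chain (· < ·) ((v :: t : Cycle V).map f) :=
      (Cycle.chain_map f).2 (Cycle.Chain.imp hf hl.2)
    exact lt_irrefl (f v) (Cycle.chain_iff_pairwise.1 this _ (by simp) _ (by simp))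

theorem isCycle_of_cycleEdge {l : List V} (hl : l ≠ []) (hnd : l.Nodup)
    (h : ∀ a b, CycleEdge l a b → E a b) : IsCycle E l := by
  obtain ⟨v, t, rfl⟩ := List.exists_cons_of_ne_nil hl
  refine ⟨hnd, ?_⟩
  change List.IsChain E (v :: t ++ [v])
  rw [List.isChain_cons_append_singleton_iff_forall₂, List.forall₂_iff_get]
  refine ⟨by simp, fun i h₁ h₂ => h _ _ ⟨⟨i, h₁⟩, rfl, ?_⟩⟩
  have hrot : t ++ [v] = (v :: t).rotate 1 := by simp
  simp only [List.get_eq_getElem, hrot, List.getElem_rotate]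

theorem Induced.mono {S T : Set V} (hST : S ⊆ T) {a b : V} (h : Induced E S a b) :
    Induced E T a b :=
  ⟨hST h.1, hST h.2.1, h.2.2⟩

theorem IsUnicycle.not_acyclic_of_subset {S T : Set V} (hU : IsUnicycle E S) (hST : S ⊆ T) :
    ¬ Acyclic (Induced E T) := by
  obtain ⟨l, hl, hnd, -, hedge⟩ := hU
  exact fun hT => hT l (isCycle_of_cycleEdge hl hnd fun a b hab => ((hedge a b).2 hab).mono hST)

theorem acyclic_of_forall_cycleEdge_ne {l : List V} (hnd : l.Nodup) (j : Fin l.length)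
    (hE : ∀ a b, E a b → ∃ i : Fin l.length, i ≠ j ∧ l.get i = a ∧
      l.get ⟨(i + 1) % l.length, Nat.mod_lt _ i.pos⟩ = b) : Acyclic E := by
  classical
  obtain ⟨v, t, rfl⟩ := List.exists_cons_of_ne_nil (List.ne_nil_of_length_pos j.pos)
  refine Acyclic.of_potential
    (fun x => Fin.ofNat (t.length + 1) ((v :: t).idxOf x) - (j + 1)) fun a b hab => ?_
  obtain ⟨i, hij, rfl, rfl⟩ := hE a b hab
  simp only [List.get_idxOf hnd]
  have hi : Fin.ofNat (t.length + 1) i = i := Fin.ext (by simp)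
  have hi₁ : Fin.ofNat (t.length + 1) ((i + 1) % (v :: t).length) = i + 1 :=
    Fin.ext (by simp [Fin.val_add])
  rw [hi, hi₁]
  exact Fin.sub_add_one_lt_add_one_sub_add_one hij

theorem IsUnicycle.acyclic_induced_delete {S : Set V} {e : V × V} (hU : IsUnicycle E S)
    (he : Induced E S e.1 e.2) : Acyclic (Induced (Delete E e) S) := by
  obtain ⟨l, -, hnd, -, hedge⟩ := hU
  obtain ⟨j, hj₁, hj₂⟩ := (hedge _ _).1 he
  refine acyclic_of_forall_cycleEdge_ne hnd j fun a b ⟨ha, hb, hab, hne⟩ => ?_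
  obtain ⟨i, rfl, rfl⟩ := (hedge _ _).1 ⟨ha, hb, hab⟩
  refine ⟨i, ?_, rfl, rfl⟩
  rintro rfl
  exact hne (Prod.ext hj₁ hj₂)

theorem stmt10 [DecidableEq V] (E : V → V → Prop) (S : Finset V) (e : V × V)
    (m : ℕ) (hm : S.card = m) (hm2 : 2 ≤ m)
    (hU : IsUnicycle E ↑S) (he : Induced E ↑S e.1 e.2)
    (R : V → ℝ) (hR : ∀ i, R i = if i ∈ S then 1 / ((m : ℝ) - 1) else 0) :
    (∀ T : Finset V, Acyclic (Induced E ↑T) → ∑ j ∈ T, R j ≤ 1) ∧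
      Acyclic (Induced (Delete E e) ↑S) ∧
      (∑ j ∈ S, R j = (m : ℝ) / ((m : ℝ) - 1)) ∧ (1 : ℝ) < (m : ℝ) / ((m : ℝ) - 1) := by
  have hm1 : (0 : ℝ) < m - 1 := by
    have : (2 : ℝ) ≤ m := by exact_mod_cast hm2
    linarith
  have hsum : ∀ T : Finset V, ∑ j ∈ T, R j = (T ∩ S).card / ((m : ℝ) - 1) := by
    intro T
    simp only [hR, Finset.sum_ite_mem, Finset.sum_const, nsmul_eq_mul]
    ring
  refine ⟨fun T hT => ?_, hU.acyclic_induced_delete he, by rw [hsum, Finset.inter_self, hm], ?_⟩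
  · have hST : ¬ (S : Set V) ⊆ T := fun h => hU.not_acyclic_of_subset h hT
    have hcard : (T ∩ S).card < m := hm ▸ Finset.card_lt_card
      ⟨Finset.inter_subset_right, fun h => hST fun x hx => (Finset.mem_inter.1 (h hx)).1⟩
    have : ((T ∩ S).card : ℝ) + 1 ≤ m := by exact_mod_cast hcard
    rw [hsum, div_le_one hm1]
    linarith
  · rw [one_lt_div hm1]
    linarith
end

section
/- Let k ≥ 1 and let R_0, R_1, ..., R_k be nonnegative real numbers assigned to the vertices 0, 1, ..., k of an undirected path with edges {j, j+1} for j = 0, ..., k−1. Then there exist nonnegative edge weights ρ_{{j,j+1}}, j = 0, ..., k−1, such that (a) for every vertex j, the sum of ρ over edges incident to j is at least R_j, and (b) the total sum Σ_j ρ_{{j,j+1}} equals Σ_{j∈I} R_j for some independent set I of the path (a set of vertices containing no two consecutive indices). -/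
/-!
Induction on the length of the path. Give the last edge `{k, k+1}` weight `R (k+1)` and solve the
shorter path with the demand of vertex `k` lowered to `max (R k - R (k+1)) 0`. If the independent
set `I` found there contains `k` and `R k > R (k+1)`, then `I` still works, since the total weight
grew by exactly the amount subtracted from `R k`. Otherwise the residual demand of `k` is either
unused or zero, and putting `k + 1` into `I` in place of `k` accounts for the new weight `R (k+1)`.
-/

variable {V : Type*}

open Finset Function

namespace PathCover

def incidentSum (k : ℕ) (ρ : ℕ → ℝ) (j : ℕ) : ℝ :=
  ∑ e ∈ (range k).filter (fun e => e = j ∨ e + 1 = j), ρ e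

def IsIndepSet (k : ℕ) (I : Finset ℕ) : Prop :=
  I ⊆ range (k + 1) ∧ ∀ a ∈ I, a + 1 ∉ I

def IsChainCover (k : ℕ) (R ρ : ℕ → ℝ) (I : Finset ℕ) : Prop :=
  (∀ e < k, 0 ≤ ρ e) ∧ (∀ j ≤ k, R j ≤ incidentSum k ρ j) ∧ IsIndepSet k I ∧
    ∑ e ∈ range k, ρ e = ∑ j ∈ I, R j

theorem incidentSum_succ (k : ℕ) (ρ : ℕ → ℝ) (j : ℕ) :
    incidentSum (k + 1) ρ j = incidentSum k ρ j + if k = j ∨ k + 1 = j then ρ k else 0 := by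
  simp only [incidentSum, sum_filter, sum_range_succ]

theorem incidentSum_congr {k : ℕ} {ρ ρ' : ℕ → ℝ} (h : ∀ e < k, ρ e = ρ' e) (j : ℕ) :
    incidentSum k ρ j = incidentSum k ρ' j :=
  sum_congr rfl fun e he => h e (by simp only [mem_filter, mem_range] at he; exact he.1)

theorem incidentSum_nonneg {k : ℕ} {ρ : ℕ → ℝ} (h : ∀ e < k, 0 ≤ ρ e) (j : ℕ) :
    0 ≤ incidentSum k ρ j :=
  sum_nonneg fun e he => h e (by simp only [mem_filter, mem_range] at he; exact he.1)

theorem IsIndepSet.mono {k m : ℕ} {I : Finset ℕ} (hI : IsIndepSet k I) (hkm : k ≤ m) :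
    IsIndepSet m I :=
  ⟨hI.1.trans (range_subset_range.mpr (by omega)), hI.2⟩

theorem IsIndepSet.insert_succ_erase {k : ℕ} {I : Finset ℕ} (hI : IsIndepSet k I) :
    IsIndepSet (k + 1) (insert (k + 1) (I.erase k)) := by
  have hlt : ∀ a ∈ I.erase k, a < k := fun a ha => by
    have := mem_range.mp (hI.1 (mem_of_mem_erase ha))
    have := ne_of_mem_erase ha
    omega
  refine ⟨fun a ha => ?_, fun a ha hsucc => ?_⟩
  · rcases mem_insert.mp ha with rfl | ha
    · exact self_mem_range_succ _
    · exact mem_range.mpr (by have := hlt a ha; omega)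
  · rcases mem_insert.mp ha with rfl | ha
    · rcases mem_insert.mp hsucc with h | h
      · omega
      · have := hlt _ h; omega
    · have := hlt a ha
      rcases mem_insert.mp hsucc with h | h
      · omega
      · exact hI.2 a (mem_of_mem_erase ha) (mem_of_mem_erase h)

theorem exists_isChainCover_one {R : ℕ → ℝ} (hR : 0 ≤ R 0) :
    ∃ ρ I, IsChainCover 1 R ρ I := by
  refine ⟨fun _ => max (R 0) (R 1), if R 1 ≤ R 0 then {0} else {1},
    fun _ _ => le_max_of_le_left hR, fun j hj => ?_, ?_, ?_⟩
  · interval_cases j <;> simp [incidentSum, filter_singleton]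
  · split_ifs <;> simp [IsIndepSet]
  · split_ifs with h
    · simp [max_eq_left h]
    · simp [max_eq_right (le_of_not_ge h)]

section Extend

variable {k : ℕ} {R ρ : ℕ → ℝ}

theorem le_incidentSum_succ_update (hρ : ∀ e < k, 0 ≤ ρ e)
    (hcov : ∀ j ≤ k, update R k (max (R k - R (k + 1)) 0) j ≤ incidentSum k ρ j) :
    ∀ j ≤ k + 1, R j ≤ incidentSum (k + 1) (update ρ k (R (k + 1))) j := fun j hj => by
  rw [incidentSum_succ, incidentSum_congr (fun e he => update_of_ne (by omega) _ _), update_self]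
  rcases lt_trichotomy j k with hjk | rfl | hjk
  · rw [if_neg (by omega), add_zero]
    simpa [hjk.ne] using hcov j hjk.le
  · rw [if_pos (Or.inl rfl)]
    have := hcov j le_rfl
    rw [update_self] at this
    linarith [le_max_left (R j - R (j + 1)) 0]
  · obtain rfl : j = k + 1 := by omega
    rw [if_pos (Or.inr rfl)]
    linarith [incidentSum_nonneg hρ (k + 1)]

theorem IsIndepSet.exists_succ_sum_eq {I : Finset ℕ} (hI : IsIndepSet k I) :
    ∃ J, IsIndepSet (k + 1) J ∧
      ∑ j ∈ J, R j = ∑ j ∈ I, update R k (max (R k - R (k + 1)) 0) j + R (k + 1) := by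
  by_cases hkeep : k ∈ I ∧ R (k + 1) < R k
  · refine ⟨I, hI.mono k.le_succ, ?_⟩
    rw [sum_update_of_mem hkeep.1, sum_eq_add_sum_sdiff_singleton_of_mem hkeep.1,
      max_eq_left (by linarith [hkeep.2])]
    ring
  · refine ⟨insert (k + 1) (I.erase k), hI.insert_succ_erase, ?_⟩
    have hI_erase : ∑ j ∈ I, update R k (max (R k - R (k + 1)) 0) j
        = ∑ j ∈ I.erase k, update R k (max (R k - R (k + 1)) 0) j := by
      by_cases hk : k ∈ I
      · refine (sum_erase I ?_).symm
        rw [update_self]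
        exact max_eq_right (by linarith [not_lt.mp fun h => hkeep ⟨hk, h⟩])
      · rw [erase_eq_of_notMem hk]
    rw [hI_erase, sum_update_of_notMem (notMem_erase k I),
      sum_insert fun h => by have := mem_range.mp (hI.1 (mem_of_mem_erase h)); omega]
    ring

theorem IsChainCover.extend {I : Finset ℕ} (hR : 0 ≤ R (k + 1))
    (hcover : IsChainCover k (update R k (max (R k - R (k + 1)) 0)) ρ I) :
    ∃ ρ I, IsChainCover (k + 1) R ρ I := by
  obtain ⟨hρ, hcov, hI, hsum⟩ := hcover
  obtain ⟨J, hJ, hJsum⟩ := hI.exists_succ_sum_eq (R := R)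
  refine ⟨update ρ k (R (k + 1)), J, fun e he => ?_, le_incidentSum_succ_update hρ hcov, hJ, ?_⟩
  · rcases eq_or_ne e k with rfl | hek
    · simpa using hR
    · rw [update_of_ne hek]; exact hρ e (by omega)
  · rw [sum_range_succ, sum_congr rfl fun e he => update_of_ne (mem_range.mp he).ne _ _, hsum,
      update_self, hJsum]

end Extend

theorem exists_isChainCover {k : ℕ} (hk : 1 ≤ k) {R : ℕ → ℝ} (hR : ∀ j ≤ k, 0 ≤ R j) :
    ∃ ρ I, IsChainCover k R ρ I := by
  induction k, hk using Nat.le_induction generalizing R with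
  | base => exact exists_isChainCover_one (hR 0 (by omega))
  | succ k hk ih =>
    have hresidual : ∀ j ≤ k, 0 ≤ update R k (max (R k - R (k + 1)) 0) j := fun j hj => by
      rcases eq_or_ne j k with rfl | hjk
      · simp
      · simpa [hjk] using hR j (by omega)
    obtain ⟨ρ, I, hcover⟩ := ih hresidual
    exact hcover.extend (hR (k + 1) le_rfl)

end PathCover

theorem stmt12 (k : ℕ) (hk : 1 ≤ k) (R : ℕ → ℝ) (hR : ∀ j ≤ k, 0 ≤ R j) :
    ∃ ρ : ℕ → ℝ, (∀ e < k, 0 ≤ ρ e) ∧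
      (∀ j ≤ k, R j ≤ ∑ e ∈ (Finset.range k).filter (fun e => e = j ∨ e + 1 = j), ρ e) ∧
      ∃ I : Finset ℕ, I ⊆ Finset.range (k + 1) ∧ (∀ a ∈ I, a + 1 ∉ I) ∧
        ∑ e ∈ Finset.range k, ρ e = ∑ j ∈ I, R j := by
  obtain ⟨ρ, I, hρ, hcov, ⟨hIsub, hIindep⟩, hsum⟩ := PathCover.exists_isChainCover hk hR
  exact ⟨ρ, hρ, hcov, I, hIsub, hIindep, hsum⟩
end

section
/- Let k ≥ 1 and let R_0, ..., R_k be nonnegative reals on the path with vertices {0, ..., k} and edges {j, j+1}. Suppose that for every independent set I of the path, Σ_{j∈I} R_j ≤ 1. Then there exist nonnegative edge weights ρ_e on the edges of the path such that every vertex j satisfies Σ_{e ∋ j} ρ_e ≥ R_j and the total weight Σ_e ρ_e ≤ 1. -/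
variable {V : Type*}

/-!
The maximum weight `W n = maxIndepWeight R n` of an independent set of the path on `{0, …, n - 1}` obeys the
recurrence `W (n + 2) = max (W (n + 1)) (W n + R (n + 1))`, so `R j ≤ W (j + 1) - W (j - 1)`.
Reading `W` as a potential along the path, with its value at the last vertex `k` raised to
`W (k + 1) ≤ 1`, the successive differences are nonnegative edge weights: the two edges at `j`
carry `W (j + 1) - W (j - 1)` in total, and all edges together telescope to `W (k + 1)`.
-/

open Finset

def PathIndependent (I : Finset ℕ) : Prop := ∀ a ∈ I, a + 1 ∉ I

lemma PathIndependent.insert_succ {I : Finset ℕ} {n : ℕ} (hI : PathIndependent I)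
    (hsub : I ⊆ range n) : PathIndependent (insert (n + 1) I) := by
  have hlt : ∀ a ∈ I, a < n := fun a ha => mem_range.mp (hsub ha)
  intro a ha hsucc
  rw [mem_insert] at ha hsucc
  rcases ha with rfl | ha
  · rcases hsucc with h | h
    · omega
    · exact absurd (hlt _ h) (by omega)
  · rcases hsucc with h | h
    · exact absurd (hlt a ha) (by omega)
    · exact hI a ha h

def maxIndepWeight (R : ℕ → ℝ) : ℕ → ℝ
  | 0 => 0
  | 1 => max 0 (R 0)
  | n + 2 => max (maxIndepWeight R (n + 1)) (maxIndepWeight R n + R (n + 1))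

section

variable (R : ℕ → ℝ)

lemma maxIndepWeight_mono : Monotone (maxIndepWeight R) := by
  refine monotone_nat_of_le_succ fun n => ?_
  cases n <;> exact le_max_left _ _

lemma le_maxIndepWeight_succ_sub_pred (j : ℕ) :
    R j ≤ maxIndepWeight R (j + 1) - maxIndepWeight R (j - 1) := by
  cases j with
  | zero => simp [maxIndepWeight]
  | succ n =>
    have := le_max_right (maxIndepWeight R (n + 1)) (maxIndepWeight R n + R (n + 1))
    simp only [maxIndepWeight, Nat.add_sub_cancel] at this ⊢
    linarith

lemma exists_pathIndependent_le_sum : ∀ n : ℕ, ∃ I ⊆ range n,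
    PathIndependent I ∧ maxIndepWeight R n ≤ ∑ j ∈ I, R j
  | 0 => ⟨∅, empty_subset _, by simp [PathIndependent], by simp [maxIndepWeight]⟩
  | 1 => by
    rcases max_choice 0 (R 0) with h | h <;> simp only [maxIndepWeight, h]
    · exact ⟨∅, empty_subset _, by simp [PathIndependent], by simp⟩
    · exact ⟨{0}, by simp, by simp [PathIndependent], by simp⟩
  | n + 2 => by
    obtain ⟨I₁, hsub₁, hind₁, hle₁⟩ := exists_pathIndependent_le_sum (n + 1)
    obtain ⟨I₀, hsub₀, hind₀, hle₀⟩ := exists_pathIndependent_le_sum n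
    rcases max_choice (maxIndepWeight R (n + 1)) (maxIndepWeight R n + R (n + 1)) with h | h <;>
      simp only [maxIndepWeight, h]
    · exact ⟨I₁, hsub₁.trans (range_subset_range.mpr (by omega)), hind₁, hle₁⟩
    · have hnot : n + 1 ∉ I₀ := fun hmem => by simpa using hsub₀ hmem
      refine ⟨insert (n + 1) I₀, insert_subset (by simp) ?_, hind₀.insert_succ hsub₀, ?_⟩
      · exact hsub₀.trans (range_subset_range.mpr (by omega))
      · rw [sum_insert hnot]
        linarith

end

lemma filter_incident_eq_Ico (k j : ℕ) :
    (range k).filter (fun e => e = j ∨ e + 1 = j) = Ico (j - 1) (min (j + 1) k) := by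
  ext e
  simp only [mem_filter, mem_range, mem_Ico]
  omega

lemma sum_incident_edges_sub (φ : ℕ → ℝ) {k j : ℕ} (hj : j ≤ k + 1) :
    ∑ e ∈ (range k).filter (fun e => e = j ∨ e + 1 = j), (φ (e + 1) - φ e) =
      φ (min (j + 1) k) - φ (j - 1) := by
  rw [filter_incident_eq_Ico, sum_Ico_sub φ (by omega)]

theorem stmt13_general (k : ℕ) (hk : 1 ≤ k) (R : ℕ → ℝ)
    (hI : ∀ I : Finset ℕ, I ⊆ Finset.range (k + 1) → (∀ a ∈ I, a + 1 ∉ I) →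
      ∑ j ∈ I, R j ≤ 1) :
    ∃ ρ : ℕ → ℝ, (∀ e < k, 0 ≤ ρ e) ∧
      (∀ j ≤ k, R j ≤ ∑ e ∈ (Finset.range k).filter (fun e => e = j ∨ e + 1 = j), ρ e) ∧
      ∑ e ∈ Finset.range k, ρ e ≤ 1 := by
  set W := maxIndepWeight R
  set φ : ℕ → ℝ := fun n => W (if n < k then n else n + 1)
  have hφ : Monotone φ := (maxIndepWeight_mono R).comp fun a b hab => by
    split_ifs <;> omega
  refine ⟨fun e => φ (e + 1) - φ e, fun e _ => sub_nonneg.mpr (hφ (by omega)), ?_, ?_⟩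
  · intro j hj
    rw [sum_incident_edges_sub φ (by omega)]
    have hpred : φ (j - 1) = W (j - 1) := by simp only [φ, if_pos (by omega : j - 1 < k)]
    have hsucc : W (j + 1) ≤ φ (min (j + 1) k) := by
      refine maxIndepWeight_mono R ?_
      split_ifs <;> omega
    linarith [le_maxIndepWeight_succ_sub_pred R j]
  · obtain ⟨I, hsub, hind, hle⟩ := exists_pathIndependent_le_sum R (k + 1)
    have hW : W (k + 1) ≤ 1 := hle.trans (hI I hsub hind)
    rw [sum_range_sub φ]
    simpa [φ, W, maxIndepWeight, show 0 < k by omega] using hW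

theorem stmt13 (k : ℕ) (hk : 1 ≤ k) (R : ℕ → ℝ) (hR : ∀ j ≤ k, 0 ≤ R j)
    (hI : ∀ I : Finset ℕ, I ⊆ Finset.range (k + 1) → (∀ a ∈ I, a + 1 ∉ I) →
      ∑ j ∈ I, R j ≤ 1) :
    ∃ ρ : ℕ → ℝ, (∀ e < k, 0 ≤ ρ e) ∧
      (∀ j ≤ k, R j ≤ ∑ e ∈ (Finset.range k).filter (fun e => e = j ∨ e + 1 = j), ρ e) ∧
      ∑ e ∈ Finset.range k, ρ e ≤ 1 :=
  stmt13_general k hk R hI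
end

section
/- Let n ≥ 3 and let G be the directed graph on vertices {1, ..., n} with edge set E = {(j+1, j) : 1 ≤ j ≤ n−1} ∪ {(1, n)} (a single directed Hamiltonian cycle). Construct G' on vertices {1, ..., n+1} by adding the edges (1, n+1), (n+1, i), (j, n+1), (n+1, k) for some 1 ≤ i < j ≤ k ≤ n. Then every edge of G' belongs to a vertex-induced unicycle of G'. -/
variable {V : Type*}

def descFrom : ℕ → ℕ → List ℕ
  | _, 0 => []
  | b, c+1 => b :: descFrom (b-1) c

lemma length_descFrom (b c : ℕ) : (descFrom b c).length = c := by
  induction c generalizing b with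
  | zero => rfl
  | succ c ih => simp [descFrom, ih]

lemma get_descFrom (b c t : ℕ) (h : t < (descFrom b c).length) :
    (descFrom b c).get ⟨t, h⟩ = b - t := by
  induction c generalizing b t with
  | zero => simp [descFrom] at h
  | succ c ih =>
    cases t with
    | zero => rfl
    | succ t =>
      show (descFrom (b-1) c).get ⟨t, _⟩ = b - (t + 1)
      rw [ih]
      omega

lemma mem_descFrom (b c : ℕ) (hcb : c ≤ b) (v : ℕ) :
    v ∈ descFrom b c ↔ b - c < v ∧ v ≤ b := by
  induction c generalizing b with
  | zero => simp [descFrom]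
  | succ c ih =>
    have := ih (b-1) (by omega)
    simp [descFrom, this]
    omega

lemma nodup_descFrom (b c : ℕ) (hcb : c ≤ b) : (descFrom b c).Nodup := by
  induction c generalizing b with
  | zero => simp [descFrom]
  | succ c ih =>
    simp only [descFrom, List.nodup_cons]
    refine ⟨?_, ih (b-1) (by omega)⟩
    rw [mem_descFrom (b-1) c (by omega)]
    omega

lemma get_cons_descFrom (u b c m : ℕ) (h : m < (u :: descFrom b c).length) :
    (u :: descFrom b c).get ⟨m, h⟩ = if m = 0 then u else b - (m - 1) := by
  cases m with
  | zero => rfl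
  | succ t =>
    show (descFrom b c).get ⟨t, _⟩ = _
    rw [get_descFrom]
    simp

lemma cycleEdge_of (l : List V) (x y : V) (m : ℕ) (hm : m < l.length)
    (hx : l.get ⟨m, hm⟩ = x)
    (hy : l.get ⟨(m + 1) % l.length, Nat.mod_lt _ (by omega)⟩ = y) :
    CycleEdge l x y := ⟨⟨m, hm⟩, hx, hy⟩

lemma cycleEdge_udesc (u b c x y : ℕ) (hc : 1 ≤ c) (hcb : c ≤ b) :
    CycleEdge (u :: descFrom b c) x y ↔
      (x = u ∧ y = b) ∨ (b - c < y ∧ y < b ∧ x = y + 1) ∨ (x = b + 1 - c ∧ y = u) := by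
  constructor
  · rintro ⟨⟨iv, hiv⟩, h1, h2⟩
    rw [get_cons_descFrom] at h1 h2
    simp only [List.length_cons, length_descFrom] at hiv h2
    rcases Nat.lt_or_ge (iv + 1) (c + 1) with hlt | hge
    · rw [Nat.mod_eq_of_lt hlt, if_neg (by omega)] at h2
      by_cases h0 : iv = 0
      · rw [if_pos h0] at h1
        rw [h0] at h2
        left; omega
      · rw [if_neg h0] at h1
        right; left; omega
    · have hivc : iv = c := by omega
      rw [hivc, Nat.mod_self, if_pos rfl] at h2
      rw [hivc, if_neg (by omega : ¬ c = 0)] at h1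
      right; right; omega
  · have hlen : (u :: descFrom b c).length = c + 1 := by
      simp [length_descFrom]
    rintro (⟨rfl, rfl⟩ | ⟨hy1, hy2, rfl⟩ | ⟨rfl, rfl⟩)
    · refine cycleEdge_of _ _ _ 0 (by rw [hlen]; omega) ?_ ?_
      · rw [get_cons_descFrom]; simp
      · rw [get_cons_descFrom]
        rw [hlen, Nat.mod_eq_of_lt (by omega)]
        simp
    · refine cycleEdge_of _ _ _ (b - y) (by rw [hlen]; omega) ?_ ?_
      · rw [get_cons_descFrom, if_neg (by omega)]
        omega
      · rw [get_cons_descFrom, hlen, Nat.mod_eq_of_lt (by omega),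
          if_neg (by omega)]
        omega
    · refine cycleEdge_of _ _ _ c (by rw [hlen]; omega) ?_ ?_
      · rw [get_cons_descFrom, if_neg (by omega)]
        omega
      · rw [get_cons_descFrom, hlen, Nat.mod_self, if_pos rfl]

theorem stmt15 (n i j k : ℕ) (hn : 3 ≤ n) (hi : 1 ≤ i) (hij : i < j) (hjk : j ≤ k)
    (hkn : k ≤ n) (E : ℕ → ℕ → Prop)
    (hE : ∀ a b, E a b ↔
      ((∃ t, 1 ≤ t ∧ t ≤ n - 1 ∧ a = t + 1 ∧ b = t) ∨ (a = 1 ∧ b = n) ∨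
        (a = 1 ∧ b = n + 1) ∨ (a = n + 1 ∧ b = i) ∨ (a = j ∧ b = n + 1) ∨
        (a = n + 1 ∧ b = k))) :
    ∀ a b, E a b → ∃ S : Set ℕ, IsUnicycle E S ∧ Induced E S a b := by
  have key1 : IsUnicycle E {v | 1 ≤ v ∧ v ≤ n} := by
    refine ⟨1 :: descFrom n (n-1), by simp, ?_, ?_, ?_⟩
    · simp only [List.nodup_cons]
      refine ⟨?_, nodup_descFrom n (n-1) (by omega)⟩
      rw [mem_descFrom n (n-1) (by omega)]
      omega
    · intro v
      simp only [List.mem_cons, mem_descFrom n (n-1) (by omega), Set.mem_setOf_eq]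
      omega
    · intro x y
      rw [cycleEdge_udesc 1 n (n-1) x y (by omega) (by omega)]
      constructor
      · rintro ⟨hx, hy, hxy⟩
        simp only [Set.mem_setOf_eq] at hx hy
        rcases (hE x y).1 hxy with ⟨t, ht1, ht2, rfl, rfl⟩ | ⟨rfl, rfl⟩ | ⟨rfl, rfl⟩ |
          ⟨rfl, rfl⟩ | ⟨rfl, rfl⟩ | ⟨rfl, rfl⟩ <;> omega
      · rintro (⟨rfl, rfl⟩ | ⟨h1, h2, rfl⟩ | ⟨rfl, rfl⟩)
        · refine ⟨?_, ?_, (hE _ _).2 (Or.inr (Or.inl ⟨rfl, rfl⟩))⟩ <;>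
            simp only [Set.mem_setOf_eq, or_true, true_or] <;> omega
        · refine ⟨?_, ?_, (hE _ _).2 (Or.inl ⟨y, by omega, by omega, rfl, rfl⟩)⟩ <;>
            simp only [Set.mem_setOf_eq, or_true, true_or] <;> omega
        · refine ⟨?_, ?_, (hE _ _).2 (Or.inl ⟨1, le_rfl, by omega, by omega, rfl⟩)⟩ <;>
            simp only [Set.mem_setOf_eq, or_true, true_or] <;> omega
  have key2 : IsUnicycle E {v | (1 ≤ v ∧ v ≤ i) ∨ v = n + 1} := by
    refine ⟨(n+1) :: descFrom i i, by simp, ?_, ?_, ?_⟩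
    · simp only [List.nodup_cons]
      refine ⟨?_, nodup_descFrom i i le_rfl⟩
      rw [mem_descFrom i i le_rfl]
      omega
    · intro v
      simp only [List.mem_cons, mem_descFrom i i le_rfl, Set.mem_setOf_eq]
      omega
    · intro x y
      rw [cycleEdge_udesc (n+1) i i x y (by omega) le_rfl]
      constructor
      · rintro ⟨hx, hy, hxy⟩
        simp only [Set.mem_setOf_eq] at hx hy
        rcases (hE x y).1 hxy with ⟨t, ht1, ht2, rfl, rfl⟩ | ⟨rfl, rfl⟩ | ⟨rfl, rfl⟩ |
          ⟨rfl, rfl⟩ | ⟨rfl, rfl⟩ | ⟨rfl, rfl⟩ <;> omega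
      · rintro (⟨rfl, rfl⟩ | ⟨h1, h2, rfl⟩ | ⟨rfl, rfl⟩)
        · refine ⟨?_, ?_, (hE _ _).2 (Or.inr (Or.inr (Or.inr (Or.inl ⟨rfl, rfl⟩))))⟩ <;>
            simp only [Set.mem_setOf_eq, or_true, true_or] <;> omega
        · refine ⟨?_, ?_, (hE _ _).2 (Or.inl ⟨y, by omega, by omega, rfl, rfl⟩)⟩ <;>
            simp only [Set.mem_setOf_eq, or_true, true_or] <;> omega
        · refine ⟨?_, ?_, (hE _ _).2 (Or.inr (Or.inr (Or.inl ⟨by omega, rfl⟩)))⟩ <;>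
            simp only [Set.mem_setOf_eq, or_true, true_or] <;> omega
  have key3 : IsUnicycle E {v | (j ≤ v ∧ v ≤ k) ∨ v = n + 1} := by
    refine ⟨(n+1) :: descFrom k (k+1-j), by simp, ?_, ?_, ?_⟩
    · simp only [List.nodup_cons]
      refine ⟨?_, nodup_descFrom k (k+1-j) (by omega)⟩
      rw [mem_descFrom k (k+1-j) (by omega)]
      omega
    · intro v
      simp only [List.mem_cons, mem_descFrom k (k+1-j) (by omega), Set.mem_setOf_eq]
      omega
    · intro x y
      rw [cycleEdge_udesc (n+1) k (k+1-j) x y (by omega) (by omega)]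
      constructor
      · rintro ⟨hx, hy, hxy⟩
        simp only [Set.mem_setOf_eq] at hx hy
        rcases (hE x y).1 hxy with ⟨t, ht1, ht2, rfl, rfl⟩ | ⟨rfl, rfl⟩ | ⟨rfl, rfl⟩ |
          ⟨rfl, rfl⟩ | ⟨rfl, rfl⟩ | ⟨rfl, rfl⟩ <;> omega
      · rintro (⟨rfl, rfl⟩ | ⟨h1, h2, rfl⟩ | ⟨rfl, rfl⟩)
        · refine ⟨?_, ?_, (hE _ _).2 (Or.inr (Or.inr (Or.inr (Or.inr (Or.inr ⟨rfl, rfl⟩)))))⟩ <;>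
            simp only [Set.mem_setOf_eq, or_true, true_or] <;> omega
        · refine ⟨?_, ?_, (hE _ _).2 (Or.inl ⟨y, by omega, by omega, rfl, rfl⟩)⟩ <;>
            simp only [Set.mem_setOf_eq, or_true, true_or] <;> omega
        · refine ⟨?_, ?_, (hE _ _).2 (Or.inr (Or.inr (Or.inr (Or.inr (Or.inl ⟨by omega, rfl⟩)))))⟩ <;>
            simp only [Set.mem_setOf_eq, or_true, true_or] <;> omega
  intro a b hab
  rcases (hE a b).1 hab with ⟨t, ht1, ht2, rfl, rfl⟩ | ⟨rfl, rfl⟩ | ⟨rfl, rfl⟩ |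
    ⟨rfl, rfl⟩ | ⟨rfl, rfl⟩ | ⟨rfl, rfl⟩
  · refine ⟨_, key1, ?_, ?_, hab⟩ <;> simp only [Set.mem_setOf_eq, or_true, true_or] <;> omega
  · refine ⟨_, key1, ?_, ?_, hab⟩ <;> simp only [Set.mem_setOf_eq, or_true, true_or] <;> omega
  · refine ⟨_, key2, ?_, ?_, hab⟩ <;> simp only [Set.mem_setOf_eq, or_true, true_or] <;> omega
  · refine ⟨_, key2, ?_, ?_, hab⟩ <;> simp only [Set.mem_setOf_eq, or_true, true_or] <;> omega
  · refine ⟨_, key3, ?_, ?_, hab⟩ <;> simp only [Set.mem_setOf_eq, or_true, true_or] <;> omega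
  · refine ⟨_, key3, ?_, ?_, hab⟩ <;> simp only [Set.mem_setOf_eq, or_true, true_or] <;> omega
end
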